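/- arXiv:2410.18867 — 4 statements merged into one kernel-verified Lean document; each statement's English description precedes it below -/
import Mathlib

section
/- If q₁,…,qₙ are polynomials over a field of characteristic zero with pairwise distinct degrees d₁,…,dₙ, then the Wronskian W(q₁,…,qₙ) is a polynomial of degree exactly d₁+⋯+dₙ − C(n,2). -/
/-!
Expanding the determinant, the permutation `σ` contributes `∏ i, derivative^[σ i] (p i)`, of degree
at most `N = ∑ dᵢ - C(n,2)` and with coefficient `∏ i, dᵢ.descFactorial (σ i) * cᵢ` at `X ^ N`
(`cᵢ` the leading coefficients); a term with some `σ i > dᵢ` vanishes, so the truncated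
subtraction in `N` is harmless. Hence the coefficient of `X ^ N` in the Wronskian is `∏ cᵢ` times
the determinant of the falling factorials `dⱼ.descFactorial i`, which is the Vandermonde
determinant of the `dᵢ`: nonzero because the `dᵢ` are distinct in characteristic zero.
-/

open Polynomial

/-- The Wronskian of polynomials `p 0, …, p (n-1)`: the determinant of the matrix whose
`(i,j)` entry is the `i`-th derivative of `p j`. -/
noncomputable def polyWronskian {K : Type*} [CommRing K] {n : ℕ} (p : Fin n → K[X]) : K[X] :=
  Matrix.det (Matrix.of fun i j : Fin n => (fun q : K[X] => Polynomial.derivative q)^[(i : ℕ)] (p j))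

open Finset Equiv

theorem Fin.sum_val_eq_choose_two (n : ℕ) : ∑ i : Fin n, (i : ℕ) = n.choose 2 := by
  rw [Fin.sum_univ_eq_sum_range (fun i => i), sum_range_id, Nat.choose_two_right]

theorem Fin.choose_two_le_sum_of_injective {n : ℕ} {d : Fin n → ℕ} (hd : Function.Injective d) :
    n.choose 2 ≤ ∑ i, d i := by
  have hd' : Function.Injective fun i => (d i : ℤ) := Nat.cast_injective.comp hd
  have h := sum_range_le_sum (s := univ.image fun i => (d i : ℤ)) (c := 0) (by simp)
  rw [card_image_of_injective _ hd', card_univ, Fintype.card_fin,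
    sum_image fun a _ b _ hab => hd' hab] at h
  rw [← Fin.sum_val_eq_choose_two, Fin.sum_univ_eq_sum_range (fun i => i), ← Nat.cast_le (α := ℤ)]
  simpa using h

theorem Fin.sum_sub_perm_eq_sum_sub_choose_two {n : ℕ} (d : Fin n → ℕ) (σ : Perm (Fin n))
    (h : ∀ i, (σ i : ℕ) ≤ d i) : ∑ i, (d i - σ i) = ∑ i, d i - n.choose 2 := by
  rw [sum_tsub_distrib _ fun i _ => h i, ← Fin.sum_val_eq_choose_two,
    Equiv.sum_comp σ fun i => (i : ℕ)]

/-- `x.descFactorial j` is a monic polynomial of degree `j` in `x` (`descPochhammer`), so column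
operations turn this matrix into the Vandermonde matrix; this is done over `ℤ` and transported. -/
theorem Matrix.det_descFactorial_eq_det_vandermonde {R : Type*} [CommRing R] {n : ℕ}
    (d : Fin n → ℕ) :
    (Matrix.of fun i j : Fin n => ((d j).descFactorial i : R)).det =
      (Matrix.vandermonde fun i => (d i : R)).det := by
  have hℤ : (Matrix.of fun i j : Fin n => ((d j).descFactorial i : ℤ)).det =
      (Matrix.vandermonde fun i => (d i : ℤ)).det := by
    rw [← Matrix.det_transpose, Matrix.det_eval_matrixOfPolynomials_eq_det_vandermonde _
      (fun j => descPochhammer ℤ j) (fun j => descPochhammer_natDegree ℤ j)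
      (fun j => monic_descPochhammer ℤ j)]
    simp only [descPochhammer_eval_eq_descFactorial]
    rfl
  have hR := congrArg (Int.castRingHom R) hℤ
  rw [RingHom.map_det, RingHom.map_det] at hR
  convert hR using 2 <;> ext <;> simp [Matrix.vandermonde]

namespace Polynomial

variable {R : Type*}

section CommSemiring

variable [CommSemiring R]

theorem coeff_prod_sum_of_natDegree_le {ι : Type*} (s : Finset ι) (f : ι → R[X]) (e : ι → ℕ)
    (h : ∀ i ∈ s, (f i).natDegree ≤ e i) :
    (∏ i ∈ s, f i).coeff (∑ i ∈ s, e i) = ∏ i ∈ s, (f i).coeff (e i) := by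
  classical
  induction s using Finset.induction_on with
  | empty => simp
  | insert a s ha ih =>
    rw [prod_insert ha, sum_insert ha, prod_insert ha,
      coeff_mul_add_eq_of_natDegree_le (h a (mem_insert_self a s)),
      ih fun i hi => h i (mem_insert_of_mem hi)]
    exact (natDegree_prod_le _ _).trans (sum_le_sum fun i hi => h i (mem_insert_of_mem hi))

theorem coeff_iterate_derivative_natDegree_sub (p : R[X]) (k : ℕ) :
    (derivative^[k] p).coeff (p.natDegree - k) =
      (p.natDegree.descFactorial k : R) * p.leadingCoeff := by
  rcases le_or_gt k p.natDegree with hk | hk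
  · rw [coeff_iterate_derivative, Nat.sub_add_cancel hk, nsmul_eq_mul, leadingCoeff]
  · rw [iterate_derivative_eq_zero hk, coeff_zero, Nat.descFactorial_eq_zero_iff_lt.mpr hk,
      Nat.cast_zero, zero_mul]

variable {n : ℕ} (p : Fin n → R[X]) (σ : Perm (Fin n))

theorem prod_iterate_derivative_eq_zero_of_natDegree_lt {i : Fin n}
    (h : (p i).natDegree < σ i) : ∏ j, derivative^[σ j] (p j) = 0 :=
  prod_eq_zero (mem_univ i) (iterate_derivative_eq_zero h)

theorem natDegree_prod_iterate_derivative_perm_le :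
    (∏ i, derivative^[σ i] (p i)).natDegree ≤ ∑ i, (p i).natDegree - n.choose 2 := by
  by_cases h : ∃ i, (p i).natDegree < σ i
  · obtain ⟨i, hi⟩ := h
    simp [prod_iterate_derivative_eq_zero_of_natDegree_lt p σ hi]
  · push Not at h
    rw [← Fin.sum_sub_perm_eq_sum_sub_choose_two _ σ h]
    exact (natDegree_prod_le _ _).trans
      (sum_le_sum fun i _ => natDegree_iterate_derivative (p i) (σ i))

theorem coeff_prod_iterate_derivative_perm :
    (∏ i, derivative^[σ i] (p i)).coeff (∑ i, (p i).natDegree - n.choose 2) =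
      ∏ i, ((p i).natDegree.descFactorial (σ i) : R) * (p i).leadingCoeff := by
  by_cases h : ∃ i, (p i).natDegree < σ i
  · obtain ⟨i, hi⟩ := h
    rw [prod_iterate_derivative_eq_zero_of_natDegree_lt p σ hi, coeff_zero, eq_comm]
    exact prod_eq_zero (mem_univ i) (by simp [Nat.descFactorial_eq_zero_iff_lt.mpr hi])
  · push Not at h
    rw [← Fin.sum_sub_perm_eq_sum_sub_choose_two _ σ h, coeff_prod_sum_of_natDegree_le _ _ _
      fun i _ => natDegree_iterate_derivative (p i) (σ i)]
    simp only [coeff_iterate_derivative_natDegree_sub]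

end CommSemiring

section CommRing

variable [CommRing R] {n : ℕ}

theorem polyWronskian_eq_sum_perm (p : Fin n → R[X]) :
    polyWronskian p = ∑ σ : Perm (Fin n), (Perm.sign σ : R[X]) * ∏ i, derivative^[σ i] (p i) := by
  rw [polyWronskian, Matrix.det_apply']
  rfl

theorem natDegree_polyWronskian_le (p : Fin n → R[X]) :
    (polyWronskian p).natDegree ≤ ∑ i, (p i).natDegree - n.choose 2 := by
  rw [polyWronskian_eq_sum_perm]
  refine natDegree_sum_le_of_forall_le _ _ fun σ _ => natDegree_mul_le.trans ?_
  simpa using natDegree_prod_iterate_derivative_perm_le p σ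

theorem coeff_polyWronskian (p : Fin n → R[X]) :
    (polyWronskian p).coeff (∑ i, (p i).natDegree - n.choose 2) =
      (∏ i, (p i).leadingCoeff) * (Matrix.vandermonde fun i => ((p i).natDegree : R)).det := by
  rw [← Matrix.det_descFactorial_eq_det_vandermonde, ← Matrix.det_mul_row, Matrix.det_apply',
    polyWronskian_eq_sum_perm, finsetSum_coeff]
  refine sum_congr rfl fun σ _ => ?_
  rw [coeff_intCast_mul, coeff_prod_iterate_derivative_perm]
  simp only [Matrix.of_apply, mul_comm]

end CommRing

end Polynomial

theorem wronskian_degree_of_distinct_degrees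
    {K : Type*} [Field K] [CharZero K] {n : ℕ} (q : Fin n → K[X]) (d : Fin n → ℕ)
    (hq : ∀ i, q i ≠ 0) (hdeg : ∀ i, (q i).natDegree = d i) (hd : Function.Injective d) :
    polyWronskian q ≠ 0 ∧
      ((polyWronskian q).natDegree : ℤ) = ∑ i, (d i : ℤ) - n.choose 2 := by
  have hcoeff : (polyWronskian q).coeff (∑ i, d i - n.choose 2) ≠ 0 := by
    simp only [← hdeg, coeff_polyWronskian]
    refine mul_ne_zero (prod_ne_zero_iff.mpr fun i _ => leadingCoeff_ne_zero.mpr (hq i)) ?_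
    simp only [Matrix.det_vandermonde_ne_zero_iff, hdeg]
    exact fun i j hij => hd (Nat.cast_injective hij)
  have hle : (polyWronskian q).natDegree ≤ ∑ i, d i - n.choose 2 := by
    simpa only [hdeg] using natDegree_polyWronskian_le q
  refine ⟨fun h => hcoeff (by rw [h, coeff_zero]), ?_⟩
  rw [le_antisymm hle (le_natDegree_of_ne_zero hcoeff),
    Nat.cast_sub (Fin.choose_two_le_sum_of_injective hd), Nat.cast_sum]
end

section
/- If p₁,…,pₙ are linearly independent polynomials over a field of characteristic zero and max(deg pᵢ) ≤ n−1, then W(p₁,…,pₙ) is a nonzero constant. -/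
/-!
Write `p j = ∑_{k<n} a_{kj} X^k`. The Wronskian matrix then factors as `V * A`, where
`A = (a_{kj})` is the coefficient matrix and `V_{ik} = D^i X^k` is upper triangular with
diagonal entries `i!`. Hence `W = (∏ i!) * det A`, a constant, and `det A ≠ 0` because the
columns of `A` are the images of the independent `p j` under the isomorphism
`K[X]_{<n} ≃ Kⁿ`; the factorials are nonzero in characteristic zero.
-/

open Polynomial

namespace Polynomial

def coeffMatrix {R ι : Type*} [Semiring R] (n : ℕ) (p : ι → R[X]) : Matrix (Fin n) ι R :=
  Matrix.of fun k j => (p j).coeff k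

theorem iterate_derivative_matrix_eq_mul_coeffMatrix {R ι : Type*} [CommSemiring R] {m n : ℕ}
    {p : ι → R[X]} (hp : ∀ j, (p j).natDegree < n) :
    (Matrix.of fun (i : Fin m) j => derivative^[i] (p j)) =
      (Matrix.of fun (i : Fin m) (k : Fin n) => derivative^[i] (X ^ (k : ℕ) : R[X])) *
        (coeffMatrix n p).map C := by
  refine Matrix.ext fun i j => ?_
  rw [Matrix.of_apply, as_sum_range_C_mul_X_pow' (p j) (hp j), Finset.sum_range,
    iterate_derivative_sum]
  simp only [Matrix.mul_apply, Matrix.of_apply, Matrix.map_apply, coeffMatrix,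
    iterate_derivative_C_mul, mul_comm (derivative^[i] _)]

theorem det_iterate_derivative_X_pow {R : Type*} [CommRing R] (n : ℕ) :
    (Matrix.of fun (i k : Fin n) => derivative^[i] (X ^ (k : ℕ) : R[X])).det =
      C (∏ i : Fin n, ((i : ℕ).factorial : R)) := by
  rw [Matrix.det_of_isUpperTriangular, map_prod]
  · refine Finset.prod_congr rfl fun i _ => ?_
    rw [Matrix.of_apply, iterate_derivative_X_pow_eq_C_mul, Nat.descFactorial_self, Nat.sub_self,
      pow_zero, mul_one]
  · intro i k (h : k < i)
    rw [Matrix.of_apply, iterate_derivative_X_pow_eq_C_mul,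
      Nat.descFactorial_eq_zero_iff_lt.2 h, Nat.cast_zero, C_0, zero_mul]

theorem det_coeffMatrix_ne_zero {K : Type*} [Field K] {n : ℕ} {p : Fin n → K[X]}
    (hind : LinearIndependent K p) (hp : ∀ j, (p j).natDegree < n) :
    (coeffMatrix n p).det ≠ 0 := by
  have hmem : ∀ j, p j ∈ degreeLT K n := fun j =>
    mem_degreeLT.2 <| degree_le_natDegree.trans_lt (WithBot.coe_lt_coe.2 (hp j))
  have hind' : LinearIndependent K fun j => (⟨p j, hmem j⟩ : degreeLT K n) :=
    LinearIndependent.of_comp (degreeLT K n).subtype hind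
  rw [← isUnit_iff_ne_zero, ← Matrix.isUnit_iff_isUnit_det,
    ← Matrix.linearIndependent_cols_iff_isUnit]
  exact hind'.map' (degreeLTEquiv K n).toLinearMap (degreeLTEquiv K n).ker

end Polynomial

theorem wronskian_nonzero_const_of_low_degree
    {K : Type*} [Field K] [CharZero K] {n : ℕ} (p : Fin n → K[X])
    (hind : LinearIndependent K p) (hdeg : ∀ i, (p i).natDegree ≤ n - 1) :
    ∃ c : K, c ≠ 0 ∧ polyWronskian p = C c := by
  have hlt : ∀ j, (p j).natDegree < n := fun j => by have := j.pos; grind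
  refine ⟨(∏ i : Fin n, ((i : ℕ).factorial : K)) * (coeffMatrix n p).det,
    mul_ne_zero ?_ (det_coeffMatrix_ne_zero hind hlt), ?_⟩
  · exact Finset.prod_ne_zero_iff.2 fun i _ => Nat.cast_ne_zero.2 i.1.factorial_ne_zero
  · rw [polyWronskian, iterate_derivative_matrix_eq_mul_coeffMatrix hlt, Matrix.det_mul,
      det_iterate_derivative_X_pow, ← RingHom.mapMatrix_apply, ← RingHom.map_det,
      map_mul]
end

section
/- Let q₁,…,qₙ be Laurent polynomials over a field of characteristic zero whose maximum degrees (exponents of highest-order terms) d₁,…,dₙ are pairwise distinct. Then the Wronskian W(q₁,…,qₙ) is a Laurent polynomial whose maximum degree equals d₁+⋯+dₙ − C(n,2). -/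
open LaurentPolynomial

/-- Formal derivative of a Laurent polynomial. -/
noncomputable def lderiv {K : Type*} [CommRing K] (p : K[T;T⁻¹]) : K[T;T⁻¹] :=
  Finsupp.sum (AddMonoidAlgebra.coeff p) fun k a => LaurentPolynomial.C (a * (k : K)) * LaurentPolynomial.T (k - 1)

/-- The Wronskian of Laurent polynomials: the determinant of the matrix whose
`(i,j)` entry is the `i`-th derivative of `p j`. -/
noncomputable def lW {K : Type*} [CommRing K] {n : ℕ} (p : Fin n → K[T;T⁻¹]) : K[T;T⁻¹] :=
  Matrix.det (Matrix.of fun i j : Fin n => lderiv^[(i : ℕ)] (p j))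

/-! Expanding the determinant, the term of a permutation `σ` is `sign σ • ∏ᵢ q_i^{(σ i)}`, of degree
at most `∑ dᵢ - ∑ σ i = ∑ dᵢ - C(n,2)`, with coefficient there `∏ᵢ cᵢ (dᵢ)_{σ i}`, where `cᵢ` is the
leading coefficient of `qᵢ` and `(x)_k` the falling factorial. Summing over `σ`, the coefficient of
the Wronskian in degree `∑ dᵢ - C(n,2)` is `∏ cᵢ · det ((dⱼ)_i)`. Since `(x)_i` is monic of degree
`i`, column operations turn this determinant into the Vandermonde determinant of the `dᵢ`, which is
nonzero because the `dᵢ` are distinct integers and `K` has characteristic zero. -/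

namespace LaurentPolynomial

section Semiring

variable {R : Type*} [Semiring R]

theorem degree_le_iff {f : R[T;T⁻¹]} {m : ℤ} : f.degree ≤ m ↔ ∀ k, m < k → f.coeff k = 0 := by
  simp only [degree, Finset.max_le_iff, Finsupp.mem_support_iff, WithBot.coe_le_coe]
  exact forall_congr' fun k => by rw [← not_lt, not_imp_not]

theorem coeff_mul_of_degree_le {f g : R[T;T⁻¹]} {a b : ℤ} (hf : f.degree ≤ a) (hg : g.degree ≤ b) :
    (f * g).coeff (a + b) = f.coeff a * g.coeff b := by
  refine AddMonoidAlgebra.coeff_mul_add_of_uniqueAdd fun x y hx hy hxy => ?_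
  have hxa : x ≤ a := WithBot.coe_le_coe.mp ((Finset.le_max hx).trans hf)
  have hyb : y ≤ b := WithBot.coe_le_coe.mp ((Finset.le_max hy).trans hg)
  omega

theorem coeff_ne_zero_of_degree_eq {f : R[T;T⁻¹]} {m : ℤ} (h : f.degree = m) : f.coeff m ≠ 0 :=
  Finsupp.mem_support_iff.mp (Finset.mem_of_max h)

theorem degree_eq_of_le_of_coeff_ne_zero {f : R[T;T⁻¹]} {m : ℤ} (hle : f.degree ≤ m)
    (hm : f.coeff m ≠ 0) : f.degree = m :=
  le_antisymm hle (Finset.le_max (Finsupp.mem_support_iff.mpr hm))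

end Semiring

section CommSemiring

variable {R : Type*} [CommSemiring R]

theorem degree_prod_le {ι : Type*} (s : Finset ι) (f : ι → R[T;T⁻¹]) :
    (∏ i ∈ s, f i).degree ≤ ∑ i ∈ s, (f i).degree :=
  AddMonoidAlgebra.supDegree_prod_le (D := WithBot.some) rfl fun _ _ => rfl

theorem coeff_prod_of_degree_le {ι : Type*} {s : Finset ι} {f : ι → R[T;T⁻¹]} {e : ι → ℤ}
    (h : ∀ i ∈ s, (f i).degree ≤ e i) :
    (∏ i ∈ s, f i).coeff (∑ i ∈ s, e i) = ∏ i ∈ s, (f i).coeff (e i) := by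
  classical
  induction s using Finset.cons_induction with
  | empty => simp
  | cons i s his ih =>
    have hs : ∀ j ∈ s, (f j).degree ≤ e j := fun j hj => h j (Finset.mem_cons_of_mem hj)
    have hprod : (∏ j ∈ s, f j).degree ≤ ∑ j ∈ s, e j :=
      (degree_prod_le s f).trans (by push_cast; exact Finset.sum_le_sum hs)
    rw [Finset.prod_cons, Finset.sum_cons, Finset.prod_cons,
      coeff_mul_of_degree_le (h i (Finset.mem_cons_self i s)) hprod, ih hs]

end CommSemiring

end LaurentPolynomial

section lderiv

variable {K : Type*} [CommRing K]

theorem coeff_lderiv (p : K[T;T⁻¹]) (j : ℤ) :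
    (lderiv p).coeff j = p.coeff (j + 1) * ((j + 1 : ℤ) : K) := by
  classical
  simp only [lderiv, AddMonoidAlgebra.coeff_finsuppSum, Finsupp.sum_apply, ← single_eq_C_mul_T,
    AddMonoidAlgebra.coeff_single, Finsupp.single_apply, sub_eq_iff_eq_add]
  rw [Finsupp.sum_ite_eq']
  split_ifs with h
  · rfl
  · rw [Finsupp.notMem_support_iff.mp h, zero_mul]

theorem degree_iterate_lderiv_le {p : K[T;T⁻¹]} {m : ℤ} (hp : p.degree ≤ m) (k : ℕ) :
    (lderiv^[k] p).degree ≤ ↑(m - k) := by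
  induction k with
  | zero => simpa using hp
  | succ k ih =>
    rw [Function.iterate_succ_apply', degree_le_iff]
    intro j hj
    rw [coeff_lderiv, degree_le_iff.mp ih (j + 1) (by omega), zero_mul]

theorem coeff_iterate_lderiv_sub (p : K[T;T⁻¹]) (m : ℤ) (k : ℕ) :
    (lderiv^[k] p).coeff (m - k) = (((descPochhammer ℤ k).eval m : ℤ) : K) * p.coeff m := by
  induction k with
  | zero => simp
  | succ k ih =>
    rw [Function.iterate_succ_apply', coeff_lderiv, show m - ↑(k + 1) + 1 = m - k by omega, ih,
      descPochhammer_succ_eval]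
    push_cast
    ring

end lderiv

theorem Matrix.det_descPochhammer_eval {n : ℕ} (e : Fin n → ℤ) :
    (Matrix.of fun i j : Fin n => (descPochhammer ℤ i).eval (e j)).det = (vandermonde e).det := by
  rw [← Matrix.det_transpose,
    Matrix.det_eval_matrixOfPolynomials_eq_det_vandermonde e (fun i => descPochhammer ℤ i)
      (fun i => descPochhammer_natDegree ℤ i) (fun i => monic_descPochhammer ℤ i)]
  rfl

theorem sum_sub_perm_eq_sub_choose {n : ℕ} (e : Fin n → ℤ) (σ : Equiv.Perm (Fin n)) :
    ∑ i, (e i - σ i) = ∑ i, e i - n.choose 2 := by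
  rw [Finset.sum_sub_distrib, Equiv.sum_comp σ (fun i => ((i : ℕ) : ℤ)),
    Fin.sum_univ_eq_sum_range (fun i => (i : ℤ)), ← Nat.cast_sum, Finset.sum_range_id,
    Nat.choose_two_right]

section lW

variable {K : Type*} [CommRing K] {n : ℕ}

theorem coeff_lW (p : Fin n → K[T;T⁻¹]) (m : ℤ) :
    (lW p).coeff m =
      ∑ σ : Equiv.Perm (Fin n), (Equiv.Perm.sign σ : K) * (∏ i, lderiv^[σ i] (p i)).coeff m := by
  rw [lW, Matrix.det_apply, AddMonoidAlgebra.coeff_sum, Finsupp.finsetSum_apply]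
  refine Finset.sum_congr rfl fun σ _ => ?_
  rw [Units.smul_def, AddMonoidAlgebra.coeff_smul_apply, zsmul_eq_mul]
  rfl

theorem coeff_prod_iterate_lderiv_perm {p : Fin n → K[T;T⁻¹]} {e : Fin n → ℤ}
    (hp : ∀ i, (p i).degree ≤ e i) (σ : Equiv.Perm (Fin n)) :
    (∏ i, lderiv^[σ i] (p i)).degree ≤ ↑(∑ i, e i - n.choose 2) ∧
      (∏ i, lderiv^[σ i] (p i)).coeff (∑ i, e i - n.choose 2) =
        ∏ i, (((descPochhammer ℤ (σ i)).eval (e i) : ℤ) : K) * (p i).coeff (e i) := by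
  have hdeg i : (lderiv^[σ i] (p i)).degree ≤ ↑(e i - σ i) := degree_iterate_lderiv_le (hp i) _
  rw [← sum_sub_perm_eq_sub_choose e σ]
  refine ⟨(degree_prod_le _ _).trans ?_, ?_⟩
  · push_cast
    exact Finset.sum_le_sum fun i _ => hdeg i
  · rw [coeff_prod_of_degree_le fun i _ => hdeg i]
    exact Finset.prod_congr rfl fun i _ => coeff_iterate_lderiv_sub _ _ _

theorem degree_lW_le {p : Fin n → K[T;T⁻¹]} {e : Fin n → ℤ} (hp : ∀ i, (p i).degree ≤ e i) :
    (lW p).degree ≤ ↑(∑ i, e i - n.choose 2) := by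
  rw [degree_le_iff]
  intro k hk
  rw [coeff_lW]
  refine Finset.sum_eq_zero fun σ _ => ?_
  rw [degree_le_iff.mp (coeff_prod_iterate_lderiv_perm hp σ).1 k hk, mul_zero]

theorem coeff_lW_sum_sub_choose {p : Fin n → K[T;T⁻¹]} {e : Fin n → ℤ}
    (hp : ∀ i, (p i).degree ≤ e i) :
    (lW p).coeff (∑ i, e i - n.choose 2) =
      (∏ i, (p i).coeff (e i)) * ((Matrix.vandermonde e).det : K) := by
  rw [← Matrix.det_descPochhammer_eval, ← eq_intCast (Int.castRingHom K), RingHom.map_det,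
    Matrix.det_apply', Finset.mul_sum, coeff_lW]
  refine Finset.sum_congr rfl fun σ _ => ?_
  rw [(coeff_prod_iterate_lderiv_perm hp σ).2, Finset.prod_mul_distrib]
  simp only [RingHom.mapMatrix_apply, Matrix.map_apply, Matrix.of_apply, Int.coe_castRingHom]
  ring

end lW

theorem wronskian_laurent_max_degree_general
    {K : Type*} [Field K] [CharZero K] {n : ℕ} (q : Fin n → K[T;T⁻¹]) (d : Fin n → ℤ)
    (hd : ∀ i, (Finsupp.support (AddMonoidAlgebra.coeff (q i))).max = (d i : WithBot ℤ))
    (hinj : Function.Injective d) :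
    lW q ≠ 0 ∧
      (Finsupp.support (AddMonoidAlgebra.coeff (lW q))).max = ((∑ i, d i - n.choose 2 : ℤ) : WithBot ℤ) := by
  have hdeg i : (q i).degree = d i := hd i
  have htop : (lW q).coeff (∑ i, d i - n.choose 2) ≠ 0 := by
    rw [coeff_lW_sum_sub_choose fun i => (hdeg i).le]
    exact mul_ne_zero (Finset.prod_ne_zero_iff.mpr fun i _ => coeff_ne_zero_of_degree_eq (hdeg i))
      (Int.cast_ne_zero.mpr (Matrix.det_vandermonde_ne_zero_iff.mpr hinj))
  exact ⟨fun h => htop (by rw [h]; rfl),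
    degree_eq_of_le_of_coeff_ne_zero (degree_lW_le fun i => (hdeg i).le) htop⟩

theorem wronskian_laurent_max_degree
    {K : Type*} [Field K] [CharZero K] {n : ℕ} (q : Fin n → K[T;T⁻¹]) (d : Fin n → ℤ)
    (hq : ∀ i, q i ≠ 0) (hd : ∀ i, (Finsupp.support (AddMonoidAlgebra.coeff (q i))).max = (d i : WithBot ℤ))
    (hinj : Function.Injective d) :
    lW q ≠ 0 ∧
      (Finsupp.support (AddMonoidAlgebra.coeff (lW q))).max = ((∑ i, d i - n.choose 2 : ℤ) : WithBot ℤ) :=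
  wronskian_laurent_max_degree_general q d hd hinj
end

section
/- If r₁,…,rₙ ∈ ℤ are pairwise distinct with r₁+⋯+rₙ = C(n,2), A is an invertible n×n matrix over K, and pᵢ(t) = Σⱼ Aᵢⱼ t^{rⱼ}, then the Wronskian W(p₁,…,pₙ) is a nonzero constant. -/
open LaurentPolynomial

/-! The `i`-th derivative of `t ^ r` is `(r)_i t ^ (r - i)`, with `(r)_i` the falling factorial, so the
Wronskian matrix factors as `diag (t ^ -i) · ((r k)_i)_{i,k} · diag (t ^ r k) · Aᵀ`. The falling
factorials are monic of degree `i`, so the middle factor has the Vandermonde determinant of the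
distinct `r k`. Hence the Wronskian is a nonzero constant times `t ^ (∑ r k - C(n,2))`, and the
exponent vanishes. -/

open Matrix

lemma T_sum {R ι : Type*} [CommSemiring R] (s : Finset ι) (f : ι → ℤ) :
    (T (∑ x ∈ s, f x) : R[T;T⁻¹]) = ∏ x ∈ s, T (f x) := by
  classical
  induction s using Finset.induction_on with
  | empty => simp [T_zero]
  | insert _ _ hx ih => rw [Finset.prod_insert hx, Finset.sum_insert hx, T_add, ih]

lemma sum_univ_fin_val_eq_choose_two (n : ℕ) : ∑ i : Fin n, (i : ℤ) = n.choose 2 := by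
  rw [Fin.sum_univ_eq_sum_range (fun i => (i : ℤ)) n, ← Nat.cast_sum, Finset.sum_range_id,
    Nat.choose_two_right]

lemma det_descPochhammer_eval_ne_zero {K : Type*} [CommRing K] [IsDomain K] {n : ℕ}
    {v : Fin n → K} (hv : Function.Injective v) :
    (of fun i k : Fin n => (descPochhammer K i).eval (v k)).det ≠ 0 := by
  have h := det_eval_matrixOfPolynomials_eq_det_vandermonde v (descPochhammer K ·)
    (fun i => descPochhammer_natDegree K i) (fun i => monic_descPochhammer K i)
  rw [← det_transpose]
  exact h ▸ det_vandermonde_ne_zero_iff.mpr hv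

section LaurentWronskian

variable {K : Type*} [CommRing K]

lemma lderiv_C_mul_T (a : K) (m : ℤ) :
    lderiv (C a * T m) = C (a * (m : K)) * T (m - 1) := by
  rw [← single_eq_C_mul_T, lderiv, AddMonoidAlgebra.coeff_single, Finsupp.sum_single_index]
  simp

lemma lderiv_add (p q : K[T;T⁻¹]) : lderiv (p + q) = lderiv p + lderiv q := by
  rw [lderiv, AddMonoidAlgebra.coeff_add]
  refine Finsupp.sum_add_index' (fun k => by simp) (fun k a b => ?_)
  rw [add_mul, map_add, add_mul]

noncomputable def lderivAddHom : AddMonoid.End K[T;T⁻¹] :=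
  AddMonoidHom.mk' lderiv lderiv_add

lemma lderiv_iterate_sum {ι : Type*} (i : ℕ) (s : Finset ι) (f : ι → K[T;T⁻¹]) :
    lderiv^[i] (∑ x ∈ s, f x) = ∑ x ∈ s, lderiv^[i] (f x) :=
  map_sum (lderivAddHom ^ i) f s

lemma lderiv_iterate_C_mul_T (a : K) (m : ℤ) (i : ℕ) :
    lderiv^[i] (C a * T m) = C (a * (descPochhammer K i).eval (m : K)) * T (m - i) := by
  induction i with
  | zero => simp
  | succ i ih =>
    rw [Function.iterate_succ_apply', ih, lderiv_C_mul_T, descPochhammer_succ_eval]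
    push_cast
    ring_nf

lemma wronskianMatrix_sum_C_mul_T {n : ℕ} (r : Fin n → ℤ)
    (A : Matrix (Fin n) (Fin n) K) :
    (of fun i j : Fin n => lderiv^[(i : ℕ)] (∑ k, C (A j k) * T (r k))) =
      diagonal (fun i : Fin n => (T (-(i : ℤ)) : K[T;T⁻¹])) *
        (of fun i k : Fin n => (descPochhammer K i).eval (r k : K)).map C *
        diagonal (fun k => T (r k)) * (A.map C)ᵀ := by
  ext i j : 1
  rw [mul_apply]
  simp only [of_apply, lderiv_iterate_sum, lderiv_iterate_C_mul_T, mul_diagonal, diagonal_mul,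
    map_apply, transpose_apply, T_sub, map_mul]
  refine Finset.sum_congr rfl fun k _ => ?_
  ring

lemma lW_sum_C_mul_T {n : ℕ} (r : Fin n → ℤ)
    (A : Matrix (Fin n) (Fin n) K) :
    lW (fun i => ∑ j, C (A i j) * T (r j)) =
      C ((of fun i k : Fin n => (descPochhammer K i).eval (r k : K)).det * A.det) *
        T (∑ k, r k - n.choose 2) := by
  rw [lW, wronskianMatrix_sum_C_mul_T, det_mul, det_mul, det_mul, det_diagonal, det_diagonal,
    det_transpose, ← T_sum, ← T_sum, ← RingHom.mapMatrix_apply, ← RingHom.map_det,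
    ← RingHom.mapMatrix_apply, ← RingHom.map_det, Finset.sum_neg_distrib,
    sum_univ_fin_val_eq_choose_two, sub_eq_neg_add, T_add, map_mul]
  ring

end LaurentWronskian

theorem wronskian_laurent_nonzero_const_of_transition
    {K : Type*} [Field K] [CharZero K] {n : ℕ} (r : Fin n → ℤ)
    (hr : Function.Injective r) (hsum : ∑ i, r i = (n.choose 2 : ℤ))
    (A : Matrix (Fin n) (Fin n) K) (hA : IsUnit A.det) :
    ∃ c : K, c ≠ 0 ∧
      lW (fun i => ∑ j, LaurentPolynomial.C (A i j) * T (r j)) = LaurentPolynomial.C c := by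
  refine ⟨_, mul_ne_zero (det_descPochhammer_eval_ne_zero (Int.cast_injective.comp hr))
    hA.ne_zero, ?_⟩
  rw [lW_sum_C_mul_T, hsum, sub_self, T_zero, mul_one]
  rfl
end
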